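/- arXiv:2604.03038 — 3 statements merged into one kernel-verified Lean document; each statement's English description precedes it below -/
import Mathlib

section
/- Let $\{X_k\}$ be i.i.d. real random variables with $\mathbb{E}[X_1] > 0$ and suppose there exists $R > 0$ with $\mathbb{E}[e^{-RX_1}] = 1$. Let $S_n = x + \sum_{k=1}^n X_k$ with $x \geq 0$ and $\tau_- = \inf\{n \geq 1 : S_n < 0\}$. Then $\mathbb{P}[\tau_- < \infty] \leq e^{-Rx}$. -/
/-!
With `t = -R`, the process `M n = exp (-R * S (n + 1))` is a nonnegative martingale for the
natural filtration of the increments, because they are independent with `E[e^{-R X}] = 1`; its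
mean is `e^{-R x}`. Since `R ≥ 0`, ruin by time `n + 1` forces `max_{k ≤ n} M k ≥ 1`, so Doob's
maximal inequality (optional stopping at the first such `k`) bounds its probability by
`E[M n] = e^{-R x}`. Letting `n → ∞` gives the bound for ultimate ruin.
-/

open MeasureTheory ProbabilityTheory Finset Real

section ExponentialMartingale

variable {Ω : Type*} {X : ℕ → Ω → ℝ}

/-- Indexed so that `expWalk X t x n` depends on `X 0, …, X n`, i.e. it is `exp (t * S (n + 1))`
for `S n = x + ∑ k ∈ range n, X k`, and is adapted to the natural filtration of `X`. -/
noncomputable def expWalk (X : ℕ → Ω → ℝ) (t x : ℝ) (n : ℕ) (ω : Ω) : ℝ :=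
  exp (t * (x + ∑ k ∈ range (n + 1), X k ω))

lemma expWalk_succ (t x : ℝ) (n : ℕ) :
    expWalk X t x (n + 1) = expWalk X t x n * fun ω => exp (t * X (n + 1) ω) := by
  ext ω
  simp only [expWalk, Pi.mul_apply, sum_range_succ _ (n + 1), ← exp_add]
  ring_nf

variable [MeasurableSpace Ω] {μ : Measure Ω} (hX : iIndepFun X μ)
  (hmeas : ∀ i, Measurable (X i))
include hX hmeas

lemma integral_expWalk {t : ℝ} (hmgf : ∀ i, mgf (X i) μ t = 1) (x : ℝ) (n : ℕ) :
    μ[expWalk X t x n] = exp (t * x) := by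
  have hsum := hX.mgf_sum hmeas (range (n + 1)) (t := t)
  simp only [hmgf, prod_const_one] at hsum
  unfold mgf at hsum
  simp only [expWalk, mul_add, exp_add, integral_const_mul]
  simpa [Finset.sum_apply] using hsum

variable [IsFiniteMeasure μ]

lemma integrable_expWalk {t : ℝ} (hint : ∀ i, Integrable (fun ω => exp (t * X i ω)) μ)
    (x : ℝ) (n : ℕ) : Integrable (expWalk X t x n) μ := by
  have hsum := hX.integrable_exp_mul_sum hmeas (s := range (n + 1)) fun i _ => hint i
  unfold expWalk
  simpa only [Finset.sum_apply, mul_add, exp_add] using hsum.const_mul (exp (t * x))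

lemma martingale_expWalk {t : ℝ} (hmgf : ∀ i, mgf (X i) μ t = 1) (x : ℝ) :
    Martingale (expWalk X t x)
      (Filtration.natural X fun i => (hmeas i).stronglyMeasurable) μ := by
  set ℱ := Filtration.natural X fun i => (hmeas i).stronglyMeasurable
  have hint i : Integrable (fun ω => exp (t * X i ω)) μ :=
    .of_integral_ne_zero (show mgf (X i) μ t ≠ 0 by simp [hmgf])
  have hadapted : StronglyAdapted ℱ (expWalk X t x) := by
    intro n
    have hXk k (hk : k ∈ range (n + 1)) : Measurable[ℱ n] (X k) :=
      ((Filtration.stronglyAdapted_natural _ k).mono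
        (ℱ.mono (Nat.lt_succ_iff.mp (mem_range.mp hk)))).measurable
    exact (measurable_exp.comp
      ((measurable_const.add (Finset.measurable_sum _ hXk)).const_mul t)).stronglyMeasurable
  refine martingale_nat hadapted (integrable_expWalk hX hmeas hint x) fun n => ?_
  have hindep : Indep (MeasurableSpace.comap (X (n + 1)) inferInstance) (ℱ n) μ :=
    hX.indep_comap_natural_of_lt _ n.lt_succ_self
  have hcond : μ[fun ω => exp (t * X (n + 1) ω) | ℱ n] =ᵐ[μ] fun _ => 1 := by
    rw [← hmgf (n + 1)]
    exact condExp_indep_eq (hmeas (n + 1)).comap_le (ℱ.le n)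
      (measurable_exp.comp ((comap_measurable (X (n + 1))).const_mul t)).stronglyMeasurable
      hindep
  rw [expWalk_succ]
  filter_upwards [condExp_mul_of_stronglyMeasurable_left (hadapted n)
    (expWalk_succ (X := X) t x n ▸ integrable_expWalk hX hmeas hint x (n + 1)) (hint (n + 1)),
    hcond] with ω hpull hone
  simp [hpull, hone]

lemma measure_one_le_sup'_expWalk_le {t : ℝ} (hmgf : ∀ i, mgf (X i) μ t = 1) (x : ℝ) (n : ℕ) :
    μ {ω | 1 ≤ (range (n + 1)).sup' nonempty_range_add_one fun k => expWalk X t x k ω}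
      ≤ ENNReal.ofReal (exp (t * x)) := by
  have hM := martingale_expWalk hX hmeas hmgf x
  have hmax := maximal_ineq hM.submartingale (fun k ω => (exp_pos _).le) (ε := 1) n
  rw [ENNReal.coe_one, one_mul, NNReal.coe_one] at hmax
  refine hmax.trans (ENNReal.ofReal_le_ofReal ?_)
  rw [← integral_expWalk hX hmeas hmgf x n]
  exact setIntegral_le_integral (hM.integrable n) (ae_of_all _ fun ω => (exp_pos _).le)

lemma measure_exists_walk_neg_le {R : ℝ} (hR : 0 ≤ R) (hmgf : ∀ i, mgf (X i) μ (-R) = 1)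
    (x : ℝ) :
    μ {ω | ∃ n, 1 ≤ n ∧ x + ∑ k ∈ range n, X k ω < 0} ≤ ENNReal.ofReal (exp (-R * x)) := by
  set A : ℕ → Set Ω := fun n =>
    {ω | 1 ≤ (range (n + 1)).sup' nonempty_range_add_one fun k => expWalk X (-R) x k ω}
  have hsub : {ω | ∃ n, 1 ≤ n ∧ x + ∑ k ∈ range n, X k ω < 0} ⊆ ⋃ n, A n := by
    rintro ω ⟨n, hn, hneg⟩
    obtain ⟨m, rfl⟩ := Nat.exists_eq_add_of_le' hn
    have hm : 1 ≤ expWalk X (-R) x m ω := one_le_exp (by nlinarith)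
    exact Set.mem_iUnion.2 ⟨m, le_sup'_of_le (expWalk X (-R) x · ω) (self_mem_range_succ m) hm⟩
  have hmono : Monotone A := fun m n hmn ω hω =>
    le_trans (α := ℝ) hω (sup'_mono _ (range_subset_range.2 (by omega)) _)
  calc μ {ω | ∃ n, 1 ≤ n ∧ x + ∑ k ∈ range n, X k ω < 0}
      ≤ μ (⋃ n, A n) := measure_mono hsub
    _ = ⨆ n, μ (A n) := hmono.measure_iUnion
    _ ≤ ENNReal.ofReal (exp (-R * x)) :=
      iSup_le fun n => measure_one_le_sup'_expWalk_le hX hmeas hmgf x n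

end ExponentialMartingale

theorem lundberg_inequality_general
    {Ω : Type*} [MeasurableSpace Ω] (μ : Measure Ω) [IsProbabilityMeasure μ]
    (X : ℕ → Ω → ℝ) (hmeas : ∀ i, Measurable (X i))
    (hindep : iIndepFun X μ)
    (hident : ∀ i, IdentDistrib (X i) (X 0) μ μ)
    (R : ℝ) (hR : 0 < R)
    (hadj : ∫ ω, Real.exp (-R * X 0 ω) ∂μ = 1)
    (x : ℝ) :
    (μ {ω | ∃ n : ℕ, 1 ≤ n ∧ x + ∑ k ∈ Finset.range n, X k ω < 0}).toReal
      ≤ Real.exp (-R * x) := by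
  have hmgf i : mgf (X i) μ (-R) = 1 :=
    ((hident i).comp (by fun_prop : Measurable fun y => exp (-R * y))).integral_eq.trans hadj
  exact ENNReal.toReal_le_of_le_ofReal (exp_pos _).le
    (measure_exists_walk_neg_le hindep hmeas hR.le hmgf x)

/-- Lundberg's inequality: for an i.i.d. positive-drift random walk
`S n = x + ∑_{k<n} X k` with adjustment coefficient `R > 0`
(`E[e^{-R X}] = 1`) and `x ≥ 0`, the ultimate ruin probability satisfies
`ℙ[∃ n ≥ 1, S n < 0] ≤ e^{-R x}`. -/
theorem lundberg_inequality
    {Ω : Type*} [MeasurableSpace Ω] (μ : Measure Ω) [IsProbabilityMeasure μ]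
    (X : ℕ → Ω → ℝ) (hmeas : ∀ i, Measurable (X i))
    (hindep : iIndepFun X μ)
    (hident : ∀ i, IdentDistrib (X i) (X 0) μ μ)
    (hint : Integrable (X 0) μ) (hmean : 0 < ∫ ω, X 0 ω ∂μ)
    (R : ℝ) (hR : 0 < R)
    (hadj : ∫ ω, Real.exp (-R * X 0 ω) ∂μ = 1)
    (x : ℝ) (hx : 0 ≤ x) :
    (μ {ω | ∃ n : ℕ, 1 ≤ n ∧ x + ∑ k ∈ Finset.range n, X k ω < 0}).toReal
      ≤ Real.exp (-R * x) :=
  lundberg_inequality_general μ X hmeas hindep hident R hR hadj x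
end

section
/- Let $\{S_n\}_{n \geq 0}$ be an adapted integrable process with increments $\Delta S_n = S_n - S_{n-1}$, satisfying (A1) $\mathbb{E}[\Delta S_n \mid \mathcal{F}_{n-1}] \geq \mu > 0$ a.s. for all $n$, and (A2) $\mathbb{E}[\Delta S_n - y \mid \mathcal{F}_{n-1}, \Delta S_n > y] \leq \eta_0 < \infty$ a.s. for all $n \geq 1$ and $y \geq 0$ (whenever the conditioning event has positive probability). Let $\tau_b = \inf\{n \geq 1 : S_n > b\}$. Then $\tau_b < \infty$ a.s. and $\mathbb{E}[\tau_b] \leq \frac{(b - S_0)^+ + \eta_0}{\mu}$. -/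
/-! With `A n = {τ_b > n}`, an `ℱ n`-event, the drift gives `c μ(A n) ≤ ∫_{A n} ΔS_{n+1}`.
Summed over `n < N` the right side telescopes to `E[S_{τ_b ∧ N}] - s₀`, which is at most
`b - s₀` plus the initial excess `(s₀ - b)⁺` plus the overshoot `∫ (S_{τ_b} - b)` over
`{τ_b ≤ N}`. At the crossing step `n + 1` the overshoot is `(ΔS_{n+1} - (b - S_n)⁺)⁺`, an
overshoot of the increment above an `ℱ n`-measurable level; slicing that level into pieces on
which it is almost constant, (A2) bounds its integral by `η₀ μ(τ_b = n + 1)`. Hence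
`c ∑_{n<N} μ(τ_b > n) ≤ (b - s₀)⁺ + η₀` for every `N`, which gives both claims. -/

open MeasureTheory Filter Set Topology

section

variable {Ω : Type*} {m m0 : MeasurableSpace Ω} {μ : Measure Ω}

theorem setIntegral_mono_of_condExp_le (hm : m ≤ m0) [SigmaFinite (μ.trim hm)] {f g : Ω → ℝ}
    (hf : Integrable f μ) (hg : Integrable g μ) (hfg : μ[f|m] ≤ᵐ[μ] μ[g|m]) {s : Set Ω}
    (hs : MeasurableSet[m] s) : ∫ ω in s, f ω ∂μ ≤ ∫ ω in s, g ω ∂μ := by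
  rw [← setIntegral_condExp hm hf hs, ← setIntegral_condExp hm hg hs]
  exact setIntegral_mono_ae integrable_condExp.integrableOn integrable_condExp.integrableOn hfg

theorem mul_measureReal_le_setIntegral_of_le_condExp [IsFiniteMeasure μ] (hm : m ≤ m0)
    {f : Ω → ℝ} {c : ℝ} (hf : Integrable f μ) (hc : ∀ᵐ ω ∂μ, c ≤ μ[f|m] ω) {s : Set Ω}
    (hs : MeasurableSet[m] s) : c * μ.real s ≤ ∫ ω in s, f ω ∂μ := by
  have h := setIntegral_mono_of_condExp_le hm (integrable_const c) hf
    (by rwa [condExp_const hm]) hs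
  rwa [setIntegral_const, smul_eq_mul, mul_comm] at h

/-- Integrated form of `E[(X - Y)⁺ | m] ≤ η P(X > Y | m)`. -/
def MeanOvershootLE (μ : Measure Ω) (m : MeasurableSpace Ω) (X Y : Ω → ℝ) (η : ℝ) : Prop :=
  ∀ s, MeasurableSet[m] s → ∫ ω in s, max (X ω - Y ω) 0 ∂μ ≤ η * μ.real (s ∩ {ω | Y ω < X ω})

theorem meanOvershootLE_const_of_condExp [IsFiniteMeasure μ] (hm : m ≤ m0) {X : Ω → ℝ}
    (hX : Integrable X μ) (hXm : Measurable X) {y η : ℝ}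
    (h : ∀ᵐ ω ∂μ, μ[fun ω => max (X ω - y) 0|m] ω
      ≤ η * μ[{ω | y < X ω}.indicator fun _ => (1 : ℝ)|m] ω) :
    MeanOvershootLE μ m X (fun _ => y) η := by
  intro s hs
  have hE : MeasurableSet {ω | y < X ω} := measurableSet_lt measurable_const hXm
  have key := setIntegral_mono_of_condExp_le hm (hX.sub (integrable_const y)).pos_part
    (((integrable_const (1 : ℝ)).indicator hE).const_mul η) ?_ hs
  · rwa [integral_const_mul, setIntegral_indicator hE, setIntegral_const, smul_eq_mul,
      mul_one] at key
  · filter_upwards [h, condExp_smul η ({ω | y < X ω}.indicator fun _ => (1 : ℝ)) m]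
      with ω hω hsmul
    exact hω.trans_eq hsmul.symm

section Overshoot

variable [IsFiniteMeasure μ] {X Y : Ω → ℝ} {η : ℝ}

theorem setIntegral_overshoot_le_of_near_level (hm : m ≤ m0) (hX : Integrable X μ)
    (hXm : Measurable X) (hY : Integrable Y μ) (hYm : Measurable Y) (hη : 0 ≤ η) {y ε : ℝ}
    (hε : 0 ≤ ε) (hy : MeanOvershootLE μ m X (fun _ => y) η) {s : Set Ω}
    (hs : MeasurableSet[m] s) (hYy : ∀ ω ∈ s, Y ω < y) (hyY : ∀ ω ∈ s, y ≤ Y ω + ε) :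
    ∫ ω in s, max (X ω - Y ω) 0 ∂μ ≤ (η + ε) * μ.real (s ∩ {ω | Y ω < X ω}) := by
  set E := {ω | Y ω < X ω}
  have hE : MeasurableSet E := measurableSet_lt hYm hXm
  have hpt : ∀ ω ∈ s, max (X ω - Y ω) 0 ≤ max (X ω - y) 0 + ε * E.indicator (fun _ => 1) ω := by
    intro ω hω
    by_cases hωE : ω ∈ E
    · rw [indicator_of_mem hωE, mul_one]
      have := hyY ω hω
      exact max_le (by linarith [le_max_left (X ω - y) 0]) (by positivity)
    · have hXY : X ω ≤ Y ω := not_lt.mp hωE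
      rw [indicator_of_notMem hωE, mul_zero, add_zero, max_eq_right (by linarith)]
      exact le_max_right _ _
  have hsub : s ∩ {ω | y < X ω} ⊆ s ∩ E := fun ω ⟨hω, hyX⟩ => ⟨hω, (hYy ω hω).trans hyX⟩
  have hXy : Integrable (fun ω => max (X ω - y) 0) μ := (hX.sub (integrable_const y)).pos_part
  have hEε : Integrable (fun ω => ε * E.indicator (fun _ => 1) ω) μ :=
    ((integrable_const 1).indicator hE).const_mul ε
  calc ∫ ω in s, max (X ω - Y ω) 0 ∂μ
      ≤ ∫ ω in s, (max (X ω - y) 0 + ε * E.indicator (fun _ => 1) ω) ∂μ :=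
        setIntegral_mono_on ((hX.sub hY).pos_part).integrableOn (hXy.add hEε).integrableOn
          (hm s hs) hpt
    _ = ∫ ω in s, max (X ω - y) 0 ∂μ + ε * μ.real (s ∩ E) := by
        rw [integral_add hXy.integrableOn hEε.integrableOn, integral_const_mul,
          setIntegral_indicator hE, setIntegral_const, smul_eq_mul, mul_one]
    _ ≤ η * μ.real (s ∩ {ω | y < X ω}) + ε * μ.real (s ∩ E) := by
        gcongr
        exact hy s hs
    _ ≤ (η + ε) * μ.real (s ∩ E) := by
        have := mul_le_mul_of_nonneg_left (measureReal_mono hsub (μ := μ)) hη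
        rw [add_mul]
        linarith

theorem setIntegral_overshoot_le_add_of_forall_const (hm : m ≤ m0) (hX : Integrable X μ)
    (hXm : Measurable X) (hη : 0 ≤ η)
    (hconst : ∀ y, 0 ≤ y → MeanOvershootLE μ m X (fun _ => y) η) (hY : Integrable Y μ)
    (hYm : Measurable[m] Y) (hY0 : 0 ≤ Y) {ε : ℝ} (hε : 0 < ε) {s : Set Ω}
    (hs : MeasurableSet[m] s) :
    ∫ ω in s, max (X ω - Y ω) 0 ∂μ ≤ (η + ε) * μ.real (s ∩ {ω | Y ω < X ω}) := by
  set k : Ω → ℕ := fun ω => ⌊Y ω / ε⌋₊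
  set B : ℕ → Set Ω := fun j => s ∩ k ⁻¹' {j}
  have hB : ∀ j, MeasurableSet[m] (B j) := fun j =>
    hs.inter ((Nat.measurable_floor.comp (hYm.div_const ε)) (measurableSet_singleton j))
  have hBd : Pairwise (Function.onFun Disjoint B) := fun i j hij =>
    (pairwise_disjoint_fiber k hij).mono inter_subset_right inter_subset_right
  have hBU : ⋃ j, B j = s := by
    rw [← inter_iUnion, ← preimage_iUnion, iUnion_of_singleton, preimage_univ, inter_univ]
  have hsum : ∀ f : Ω → ℝ, Integrable f μ →
      HasSum (fun j => ∫ ω in B j, f ω ∂μ) (∫ ω in s, f ω ∂μ) := fun f hf =>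
    hBU ▸ hasSum_integral_iUnion (fun j => hm _ (hB j)) hBd hf.integrableOn
  set E := {ω | Y ω < X ω}
  have hE : MeasurableSet E := measurableSet_lt (hYm.mono hm le_rfl) hXm
  have hsetIntegral : ∀ t, ∫ ω in t, (η + ε) * E.indicator (fun _ => 1) ω ∂μ
      = (η + ε) * μ.real (t ∩ E) := fun t => by
    rw [integral_const_mul, setIntegral_indicator hE, setIntegral_const, smul_eq_mul, mul_one]
  rw [← hsetIntegral]
  refine hasSum_le (fun j => ?_) (hsum _ (hX.sub hY).pos_part)
    (hsum _ (((integrable_const 1).indicator hE).const_mul _))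
  rw [hsetIntegral]
  refine setIntegral_overshoot_le_of_near_level hm hX hXm hY (hYm.mono hm le_rfl) hη hε.le
    (hconst ((j + 1) * ε) (by positivity)) (hB j) (fun ω hω => ?_) (fun ω hω => ?_)
  · have hj : ⌊Y ω / ε⌋₊ = j := hω.2
    have := Nat.lt_floor_add_one (Y ω / ε)
    rw [hj, div_lt_iff₀ hε] at this
    exact_mod_cast this
  · have hj : ⌊Y ω / ε⌋₊ = j := hω.2
    have := Nat.floor_le (div_nonneg (hY0 ω) hε.le)
    rw [hj, le_div_iff₀ hε] at this
    linarith

theorem MeanOvershootLE.of_forall_const (hm : m ≤ m0) (hX : Integrable X μ)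
    (hXm : Measurable X) (hη : 0 ≤ η)
    (hconst : ∀ y, 0 ≤ y → MeanOvershootLE μ m X (fun _ => y) η) (hY : Integrable Y μ)
    (hYm : Measurable[m] Y) (hY0 : 0 ≤ Y) : MeanOvershootLE μ m X Y η := by
  intro s hs
  have hlim : Tendsto (fun ε => (η + ε) * μ.real (s ∩ {ω | Y ω < X ω})) (𝓝[>] 0)
      (𝓝 (η * μ.real (s ∩ {ω | Y ω < X ω}))) := by
    have hcont : Continuous fun ε => (η + ε) * μ.real (s ∩ {ω | Y ω < X ω}) := by fun_prop
    simpa using (hcont.continuousWithinAt (s := Ioi 0) (x := 0)).tendsto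
  exact ge_of_tendsto hlim (eventually_nhdsWithin_of_forall fun ε hε =>
    setIntegral_overshoot_le_add_of_forall_const hm hX hXm hη hconst hY hYm hY0 hε hs)

end Overshoot

theorem measure_eq_zero_of_forall_subset_of_summable [IsFiniteMeasure μ] {s : Set Ω}
    {t : ℕ → Set Ω} (hst : ∀ n, s ⊆ t n) (ht : Summable fun n => μ.real (t n)) : μ s = 0 := by
  have h : μ.real s ≤ 0 := ge_of_tendsto' ht.tendsto_atTop_zero fun n => measureReal_mono (hst n)
  exact (measureReal_eq_zero_iff (measure_ne_top μ s)).1 (h.antisymm measureReal_nonneg)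

/-- The event `{τ_b > n}`, where `τ_b = inf {k ≥ 1 | S k > b}`. -/
def noPassageUntil (S : ℕ → Ω → ℝ) (b : ℝ) (n : ℕ) : Set Ω :=
  {ω | ∀ k, 1 ≤ k → k ≤ n → S k ω ≤ b}

section Passage

variable {S : ℕ → Ω → ℝ} {b : ℝ}

theorem noPassageUntil_zero : noPassageUntil S b 0 = univ :=
  eq_univ_of_forall fun _ _ h1 h2 => absurd h2 (by omega)

theorem noPassageUntil_succ (n : ℕ) :
    noPassageUntil S b (n + 1) = noPassageUntil S b n ∩ {ω | S (n + 1) ω ≤ b} := by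
  ext ω
  refine ⟨fun h => ⟨fun k h1 h2 => h k h1 (by omega), h _ (by omega) le_rfl⟩, ?_⟩
  rintro ⟨h, h'⟩ k h1 h2
  obtain hk | rfl : k ≤ n ∨ k = n + 1 := by omega
  exacts [h k h1 hk, h']

theorem noPassageUntil_succ_subset (n : ℕ) :
    noPassageUntil S b (n + 1) ⊆ noPassageUntil S b n := by
  rw [noPassageUntil_succ]
  exact inter_subset_left

theorem noPassageUntil_diff_succ (n : ℕ) :
    noPassageUntil S b n \ noPassageUntil S b (n + 1)
      = noPassageUntil S b n ∩ {ω | b < S (n + 1) ω} := by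
  ext ω
  simp [noPassageUntil_succ, not_le]

theorem measurableSet_noPassageUntil {ℱ : Filtration ℕ m0} (hS : Adapted ℱ S) (n : ℕ) :
    MeasurableSet[ℱ n] (noPassageUntil S b n) := by
  induction n with
  | zero => rw [noPassageUntil_zero]; exact MeasurableSet.univ
  | succ n ih =>
    rw [noPassageUntil_succ]
    exact (ℱ.mono n.le_succ _ ih).inter (measurableSet_le (hS (n + 1)) measurable_const)

variable {ℱ : Filtration ℕ m0} {η : ℝ}

/-- `S (n + 1) - b = (ΔS - (b - S n)⁺) + (S n - b)⁺`: the positive part keeps the level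
nonnegative, as (A2) requires, and on `{τ_b > n}` the excess `(S n - b)⁺` vanishes unless
`n = 0`. -/
theorem setIntegral_diff_noPassageUntil_sub_le [IsFiniteMeasure μ] (hS : Adapted ℱ S)
    (hint : ∀ n, Integrable (S n) μ) (hη : 0 ≤ η) (n : ℕ)
    (hover : MeanOvershootLE μ (ℱ n) (fun ω => S (n + 1) ω - S n ω)
      (fun ω => max (b - S n ω) 0) η) :
    ∫ ω in noPassageUntil S b n \ noPassageUntil S b (n + 1), (S (n + 1) ω - b) ∂μ
      ≤ η * μ.real (noPassageUntil S b n \ noPassageUntil S b (n + 1))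
        + ∫ ω in noPassageUntil S b n \ noPassageUntil S b (n + 1), max (S n ω - b) 0 ∂μ := by
  set A := noPassageUntil S b n
  set D := A \ noPassageUntil S b (n + 1)
  have hA : MeasurableSet[ℱ n] A := measurableSet_noPassageUntil hS n
  have hDeq : D = A ∩ {ω | b < S (n + 1) ω} := noPassageUntil_diff_succ n
  have hD : MeasurableSet D := (ℱ.le n _ hA).diff (ℱ.le _ _ (measurableSet_noPassageUntil hS _))
  have hover_int : Integrable (fun ω => max (S (n + 1) ω - S n ω - max (b - S n ω) 0) 0) μ :=
    (((hint _).sub (hint n)).sub ((integrable_const b).sub (hint n)).pos_part).pos_part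
  have hexcess_int : Integrable (fun ω => max (S n ω - b) 0) μ :=
    ((hint n).sub (integrable_const b)).pos_part
  have hover_le : ∫ ω in D, max (S (n + 1) ω - S n ω - max (b - S n ω) 0) 0 ∂μ
      ≤ η * μ.real D := by
    have hsub : A ∩ {ω | max (b - S n ω) 0 < S (n + 1) ω - S n ω} ⊆ D := by
      rintro ω ⟨hω, hlt⟩
      rw [hDeq]
      exact ⟨hω, show b < S (n + 1) ω by linarith [le_max_left (b - S n ω) 0, hlt.out]⟩
    calc _ ≤ ∫ ω in A, max (S (n + 1) ω - S n ω - max (b - S n ω) 0) 0 ∂μ :=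
          setIntegral_mono_set hover_int.integrableOn
            (ae_of_all _ fun _ => le_max_right _ _) sdiff_subset.eventuallyLE
      _ ≤ _ := hover A hA
      _ ≤ η * μ.real D := mul_le_mul_of_nonneg_left (measureReal_mono hsub) hη
  have hpt : ∀ ω ∈ D, S (n + 1) ω - b
      ≤ max (S (n + 1) ω - S n ω - max (b - S n ω) 0) 0 + max (S n ω - b) 0 := by
    intro ω _
    rcases le_total (S n ω) b with h | h
    · rw [max_eq_left (sub_nonneg.2 h), max_eq_right (sub_nonpos.2 h)]
      linarith [le_max_left (S (n + 1) ω - S n ω - (b - S n ω)) 0]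
    · rw [max_eq_right (sub_nonpos.2 h), max_eq_left (sub_nonneg.2 h)]
      linarith [le_max_left (S (n + 1) ω - S n ω - 0) 0]
  calc _ ≤ ∫ ω in D, (max (S (n + 1) ω - S n ω - max (b - S n ω) 0) 0
          + max (S n ω - b) 0) ∂μ :=
        setIntegral_mono_on ((hint _).sub (integrable_const b)).integrableOn
          (hover_int.add hexcess_int).integrableOn hD hpt
    _ = _ := integral_add hover_int.integrableOn hexcess_int.integrableOn
    _ ≤ _ := by gcongr

theorem setIntegral_noPassageUntil_increment_le [IsFiniteMeasure μ] (hS : Adapted ℱ S)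
    (hint : ∀ n, Integrable (S n) μ) (hη : 0 ≤ η) (n : ℕ)
    (hover : MeanOvershootLE μ (ℱ n) (fun ω => S (n + 1) ω - S n ω)
      (fun ω => max (b - S n ω) 0) η) :
    ∫ ω in noPassageUntil S b n, (S (n + 1) ω - S n ω) ∂μ
      ≤ (∫ ω in noPassageUntil S b (n + 1), S (n + 1) ω ∂μ
          - ∫ ω in noPassageUntil S b n, S n ω ∂μ)
        + (b + η) * (μ.real (noPassageUntil S b n) - μ.real (noPassageUntil S b (n + 1)))
        + ∫ ω in noPassageUntil S b n \ noPassageUntil S b (n + 1), max (S n ω - b) 0 ∂μ := by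
  set D := noPassageUntil S b n \ noPassageUntil S b (n + 1)
  have hsucc : MeasurableSet (noPassageUntil S b (n + 1)) :=
    ℱ.le _ _ (measurableSet_noPassageUntil hS _)
  have hD : MeasurableSet D := (ℱ.le n _ (measurableSet_noPassageUntil hS n)).diff hsucc
  have hsplit : ∫ ω in noPassageUntil S b n, S (n + 1) ω ∂μ
      = ∫ ω in noPassageUntil S b (n + 1), S (n + 1) ω ∂μ + ∫ ω in D, S (n + 1) ω ∂μ := by
    rw [← setIntegral_union disjoint_sdiff_right hD (hint _).integrableOn (hint _).integrableOn,
      union_sdiff_cancel (noPassageUntil_succ_subset n)]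
  have hpassage : ∫ ω in D, S (n + 1) ω ∂μ = ∫ ω in D, (S (n + 1) ω - b) ∂μ + b * μ.real D := by
    rw [integral_sub (hint _).integrableOn (integrable_const b).integrableOn, setIntegral_const,
      smul_eq_mul]
    ring
  have hμD : μ.real D
      = μ.real (noPassageUntil S b n) - μ.real (noPassageUntil S b (n + 1)) :=
    measureReal_sdiff (noPassageUntil_succ_subset n) hsucc
  rw [integral_sub (hint _).integrableOn (hint n).integrableOn, hsplit, hpassage, ← hμD]
  linarith [setIntegral_diff_noPassageUntil_sub_le hS hint hη n hover]

theorem sum_setIntegral_diff_noPassageUntil_excess_le [IsProbabilityMeasure μ] {s₀ : ℝ}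
    (hS₀ : ∀ ω, S 0 ω = s₀) (N : ℕ) :
    ∑ n ∈ Finset.range N,
        ∫ ω in noPassageUntil S b n \ noPassageUntil S b (n + 1), max (S n ω - b) 0 ∂μ
      ≤ max (s₀ - b) 0 := by
  cases N with
  | zero => simp
  | succ N =>
    have hlater : ∀ n ∈ Finset.range N, ∫ ω in noPassageUntil S b (n + 1) \
        noPassageUntil S b (n + 1 + 1), max (S (n + 1) ω - b) 0 ∂μ = 0 := fun n _ =>
      setIntegral_eq_zero_of_forall_eq_zero fun ω hω =>
        max_eq_right (sub_nonpos.2 (hω.1 (n + 1) (by omega) le_rfl))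
    rw [Finset.sum_range_succ', Finset.sum_eq_zero hlater, zero_add]
    simp only [hS₀, setIntegral_const, smul_eq_mul]
    exact mul_le_of_le_one_left (le_max_right _ _) measureReal_le_one

theorem mul_sum_measureReal_noPassageUntil_le [IsProbabilityMeasure μ] (hS : Adapted ℱ S)
    (hint : ∀ n, Integrable (S n) μ) {s₀ : ℝ} (hS₀ : ∀ ω, S 0 ω = s₀) {c : ℝ}
    (hdrift : ∀ n s, MeasurableSet[ℱ n] s →
      c * μ.real s ≤ ∫ ω in s, (S (n + 1) ω - S n ω) ∂μ)
    (hη : 0 ≤ η) (hover : ∀ n, MeanOvershootLE μ (ℱ n) (fun ω => S (n + 1) ω - S n ω)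
      (fun ω => max (b - S n ω) 0) η) (N : ℕ) :
    c * ∑ n ∈ Finset.range N, μ.real (noPassageUntil S b n) ≤ max (b - s₀) 0 + η := by
  cases N with
  | zero => simpa using add_nonneg (le_max_right (b - s₀) 0) hη
  | succ N =>
    set a := fun n => μ.real (noPassageUntil S b n)
    set G := fun n => ∫ ω in noPassageUntil S b n, S n ω ∂μ
    have ha₀ : a 0 = 1 := by simp [a, noPassageUntil_zero]
    have hG₀ : G 0 = s₀ := by simp [G, noPassageUntil_zero, hS₀]
    have hG : G (N + 1) ≤ b * a (N + 1) := by
      calc G (N + 1) ≤ ∫ _ in noPassageUntil S b (N + 1), b ∂μ :=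
            setIntegral_mono_on (hint _).integrableOn (integrable_const b).integrableOn
              (ℱ.le _ _ (measurableSet_noPassageUntil hS _)) fun ω hω => hω _ (by omega) le_rfl
        _ = b * a (N + 1) := by rw [setIntegral_const, smul_eq_mul, mul_comm]
    have hsum : c * ∑ n ∈ Finset.range (N + 1), a n
        ≤ (G (N + 1) - G 0) + (b + η) * (a 0 - a (N + 1))
          + ∑ n ∈ Finset.range (N + 1), ∫ ω in noPassageUntil S b n \
              noPassageUntil S b (n + 1), max (S n ω - b) 0 ∂μ := by
      rw [← Finset.sum_range_sub G, ← Finset.sum_range_sub' a, Finset.mul_sum, Finset.mul_sum,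
        ← Finset.sum_add_distrib, ← Finset.sum_add_distrib]
      exact Finset.sum_le_sum fun n _ =>
        (hdrift n _ (measurableSet_noPassageUntil hS n)).trans
          (setIntegral_noPassageUntil_increment_le hS hint hη n (hover n))
    have hexcess := sum_setIntegral_diff_noPassageUntil_excess_le (μ := μ) (b := b) hS₀ (N + 1)
    have hmax : b - s₀ + max (s₀ - b) 0 = max (b - s₀) 0 := by
      rcases le_total s₀ b with h | h
      · rw [max_eq_right (sub_nonpos.2 h), max_eq_left (sub_nonneg.2 h)]; ring
      · rw [max_eq_left (sub_nonneg.2 h), max_eq_right (sub_nonpos.2 h)]; ring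
    rw [ha₀, hG₀] at hsum
    linarith [mul_nonneg hη (measureReal_nonneg : 0 ≤ a (N + 1))]

end Passage

end

/-- Submartingale stopping-time bound (Theorem: hitting time under drift and
one-step mean-overshoot conditions). Under (A1) uniform conditional drift
`E[ΔS n | ℱ (n-1)] ≥ c > 0` and (A2) uniform one-step mean-overshoot
`E[(ΔS n - y)⁺ | ℱ (n-1)] ≤ η₀ ℙ[ΔS n > y | ℱ (n-1)]` for all `y ≥ 0`
(the conditional form of `E[ΔS n - y | ℱ (n-1), ΔS n > y] ≤ η₀`),
the first passage time `τ_b = inf{n ≥ 1 : S n > b}` is a.s. finite and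
`E[τ_b] = ∑_{n≥0} ℙ[τ_b > n] ≤ ((b - S₀)⁺ + η₀)/c`. -/
theorem submartingale_stopping_time_bound
    {Ω : Type*} {m0 : MeasurableSpace Ω} (μ : Measure Ω) [IsProbabilityMeasure μ]
    (ℱ : Filtration ℕ m0) (S : ℕ → Ω → ℝ)
    (hadapted : Adapted ℱ S) (hint : ∀ n, Integrable (S n) μ)
    (s0 : ℝ) (hS0 : ∀ ω, S 0 ω = s0)
    (c : ℝ) (hc : 0 < c)
    (hA1 : ∀ n : ℕ, 1 ≤ n →
      ∀ᵐ ω ∂μ, c ≤ (μ[fun ω => S n ω - S (n - 1) ω | ℱ (n - 1)]) ω)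
    (η₀ : ℝ) (hη₀ : 0 < η₀)
    (hA2 : ∀ n : ℕ, 1 ≤ n → ∀ y : ℝ, 0 ≤ y →
      ∀ᵐ ω ∂μ,
        (μ[fun ω => max (S n ω - S (n - 1) ω - y) 0 | ℱ (n - 1)]) ω
          ≤ η₀ * (μ[Set.indicator {ω | y < S n ω - S (n - 1) ω}
              (fun _ => (1 : ℝ)) | ℱ (n - 1)]) ω)
    (b : ℝ) :
    μ {ω | ∀ n : ℕ, 1 ≤ n → S n ω ≤ b} = 0 ∧
    ∑' n : ℕ, (μ {ω | ∀ m : ℕ, 1 ≤ m → m ≤ n → S m ω ≤ b}).toReal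
      ≤ (max (b - s0) 0 + η₀) / c := by
  have hSm : ∀ n, Measurable (S n) := fun n => (hadapted n).mono (ℱ.le n) le_rfl
  have hΔ : ∀ n, Integrable (fun ω => S (n + 1) ω - S n ω) μ := fun n => (hint _).sub (hint n)
  have hdrift : ∀ n s, MeasurableSet[ℱ n] s →
      c * μ.real s ≤ ∫ ω in s, (S (n + 1) ω - S n ω) ∂μ := fun n s hs =>
    mul_measureReal_le_setIntegral_of_le_condExp (ℱ.le n) (hΔ n)
      (by simpa using hA1 (n + 1) (by omega)) hs
  have hover : ∀ n, MeanOvershootLE μ (ℱ n) (fun ω => S (n + 1) ω - S n ω)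
      (fun ω => max (b - S n ω) 0) η₀ := fun n =>
    MeanOvershootLE.of_forall_const (ℱ.le n) (hΔ n) ((hSm _).sub (hSm n)) hη₀.le
      (fun y hy => meanOvershootLE_const_of_condExp (ℱ.le n) (hΔ n) ((hSm _).sub (hSm n))
        (by simpa using hA2 (n + 1) (by omega) y hy))
      ((integrable_const b).sub (hint n)).pos_part
      ((measurable_const.sub (hadapted n)).max measurable_const) fun _ => le_max_right _ _
  have hsum : ∀ N, ∑ n ∈ Finset.range N, μ.real (noPassageUntil S b n)
      ≤ (max (b - s0) 0 + η₀) / c := fun N => by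
    rw [le_div_iff₀ hc, mul_comm]
    exact mul_sum_measureReal_noPassageUntil_le hadapted hint hS0 hdrift hη₀.le hover N
  exact ⟨measure_eq_zero_of_forall_subset_of_summable (t := noPassageUntil S b)
      (fun n ω hω k hk _ => hω k hk)
      (summable_of_sum_range_le (fun _ => measureReal_nonneg) hsum),
    Real.tsum_le_of_sum_range_le (fun _ => measureReal_nonneg) hsum⟩
end

section
/- Let $X$ be a real random variable with $\mathbb{P}[X \geq 0] > 0$ and suppose $\eta_0^+ := \sup_{x \geq 0} \mathbb{E}[X - x \mid X \geq x] < \infty$. Let $X_1, X_2, \dots$ be i.i.d. copies of $X$ with $\mathbb{E}[X] > 0$, $S_n = \sum_{i \leq n} X_i$, and for $A \geq 0, B \geq 0$ let $\tau = \inf\{n \geq 1 : S_n \notin [-B, A]\}$ and $\mathcal{E}_+ = \{S_\tau > A\}$. Then on the event $\mathcal{E}_+$ with $\mathbb{P}[\mathcal{E}_+] > 0$, $\mathbb{E}[S_\tau - A \mid \mathcal{E}_+] \leq \eta_0^+$. -/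
open MeasureTheory ProbabilityTheory Filter Topology Set Function
open scoped ENNReal

/-!
Split the upper-exit event according to the value `n + 1` of the exit time. On the `n`-th piece
the walk has stayed in `[-B, A]` up to time `n`, an event determined by `X 0, …, X (n - 1)`, and
the overshoot is `X n - (A - S n)` with a level `A - S n ≥ 0` determined by the same variables.
Since `X n` is independent of them and distributed as `X 0`, freezing the past bounds the
expected overshoot on this piece by `η₀` times its probability: for a fixed level `a ≥ 0`,
`E[(X - a)⁺] ≤ η₀ P[X > a]`, which is the mean-excess hypothesis at the levels `b ↓ a`.
Summing over `n` gives `E[(S τ - A) 1_E] ≤ η₀ P[E]`.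
-/

section ExitTime

variable {α : Type*} {s : ℕ → α} {I U : Set α} {n : ℕ}

/-- Equal to `0` when `s` never leaves `I`. -/
noncomputable def exitTime (s : ℕ → α) (I : Set α) : ℕ := sInf {k | 1 ≤ k ∧ s k ∉ I}

theorem exitTime_eq_succ_iff :
    exitTime s I = n + 1 ↔ (∀ k ∈ Finset.Icc 1 n, s k ∈ I) ∧ s (n + 1) ∉ I := by
  constructor
  · intro h
    unfold exitTime at h
    have hmem := Nat.sInf_mem (Nat.nonempty_of_sInf_eq_succ h)
    rw [h] at hmem
    refine ⟨fun k hk ↦ ?_, hmem.2⟩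
    rw [Finset.mem_Icc] at hk
    by_contra hks
    exact Nat.notMem_of_lt_sInf (s := {k | 1 ≤ k ∧ s k ∉ I}) (by omega) ⟨hk.1, hks⟩
  · rintro ⟨hin, hout⟩
    refine le_antisymm (Nat.sInf_le ⟨by omega, hout⟩) (le_csInf ⟨n + 1, by omega, hout⟩ ?_)
    rintro k ⟨hk1, hks⟩
    by_contra hkn
    exact hks (hin k (Finset.mem_Icc.2 ⟨hk1, by omega⟩))

theorem exitTime_eq_succ_of_mem (hIU : Disjoint I U) (hin : ∀ k ∈ Finset.Icc 1 n, s k ∈ I)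
    (hU : s (n + 1) ∈ U) : exitTime s I = n + 1 :=
  exitTime_eq_succ_iff.2 ⟨hin, fun h ↦ disjoint_left.1 hIU h hU⟩

theorem exists_exit_and_exitTime_mem_iff (hIU : Disjoint I U) :
    ((∃ n, 1 ≤ n ∧ s n ∉ I) ∧ s (exitTime s I) ∈ U) ↔
      ∃ n, (∀ k ∈ Finset.Icc 1 n, s k ∈ I) ∧ s (n + 1) ∈ U := by
  constructor
  · rintro ⟨hexit, hU⟩
    obtain ⟨n, hn⟩ : ∃ n, exitTime s I = n + 1 := Nat.exists_eq_add_one.2 (Nat.sInf_mem hexit).1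
    exact ⟨n, (exitTime_eq_succ_iff.1 hn).1, hn ▸ hU⟩
  · rintro ⟨n, hin, hU⟩
    exact ⟨⟨n + 1, by omega, fun h ↦ disjoint_left.1 hIU h hU⟩,
      exitTime_eq_succ_of_mem hIU hin hU ▸ hU⟩

end ExitTime

theorem lintegral_ofReal_sub_le_mul_measure_Ioi {ν : Measure ℝ} {c : ℝ≥0∞} {a : ℝ}
    (h : ∀ b, a < b → ∫⁻ t, ENNReal.ofReal (t - b) ∂ν ≤ c * ν (Ici b)) :
    ∫⁻ t, ENNReal.ofReal (t - a) ∂ν ≤ c * ν (Ioi a) := by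
  obtain ⟨u, hu_anti, hu_gt, hu_lim⟩ := exists_seq_strictAnti_tendsto a
  have hlim : Tendsto (fun n ↦ ∫⁻ t, ENNReal.ofReal (t - u n) ∂ν) atTop
      (𝓝 (∫⁻ t, ENNReal.ofReal (t - a) ∂ν)) :=
    lintegral_tendsto_of_tendsto_of_monotone (fun n ↦ by fun_prop)
      (ae_of_all _ fun t i j hij ↦ ENNReal.ofReal_le_ofReal (by linarith [hu_anti.antitone hij]))
      (ae_of_all _ fun t ↦ ENNReal.tendsto_ofReal (tendsto_const_nhds.sub hu_lim))
  refine le_of_tendsto' hlim fun n ↦ (h _ (hu_gt n)).trans ?_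
  gcongr
  exact hu_gt n

section Overshoot

variable {Ω : Type*} {mΩ : MeasurableSpace Ω} {μ : Measure Ω}

theorem integral_le_of_lintegral_ofReal_le {f : Ω → ℝ} (hf : 0 ≤ᵐ[μ] f) {r : ℝ} (hr : 0 ≤ r)
    (h : ∫⁻ ω, ENNReal.ofReal (f ω) ∂μ ≤ ENNReal.ofReal r) :
    ∫ ω, f ω ∂μ ≤ r := by
  by_cases hfi : Integrable f μ
  · rw [integral_eq_lintegral_of_nonneg_ae hf hfi.1]
    exact ENNReal.toReal_le_of_le_ofReal hr h
  · rwa [integral_undef hfi]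

variable [IsFiniteMeasure μ]

theorem lintegral_ofReal_sub_le_of_setIntegral_div_le {Y : Ω → ℝ} (hYm : Measurable Y)
    (hY : Integrable Y μ) {b η : ℝ} (h : 0 < (μ {ω | b ≤ Y ω}).toReal →
      (∫ ω in {ω | b ≤ Y ω}, (Y ω - b) ∂μ) / (μ {ω | b ≤ Y ω}).toReal ≤ η) :
    ∫⁻ ω, ENNReal.ofReal (Y ω - b) ∂μ ≤ ENNReal.ofReal η * μ {ω | b ≤ Y ω} := by
  set s := {ω | b ≤ Y ω}
  have hs : MeasurableSet s := measurableSet_le measurable_const hYm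
  have hle : ∫ ω in s, (Y ω - b) ∂μ ≤ η * (μ s).toReal := by
    rcases ENNReal.toReal_nonneg.eq_or_lt with h0 | hpos
    · rw [← h0, mul_zero, setIntegral_measure_zero _
        ((ENNReal.toReal_eq_zero_iff _).1 h0.symm |>.resolve_right (measure_ne_top μ s))]
    · exact (div_le_iff₀ hpos).1 (h hpos)
  have hsupp : (fun ω ↦ ENNReal.ofReal (Y ω - b)).support ⊆ s := fun ω hω ↦ by
    simpa [s, sub_pos] using (ENNReal.ofReal_pos.1 (pos_iff_ne_zero.2 hω)).le
  calc ∫⁻ ω, ENNReal.ofReal (Y ω - b) ∂μ = ∫⁻ ω in s, ENNReal.ofReal (Y ω - b) ∂μ :=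
        (setLIntegral_eq_of_support_subset hsupp).symm
    _ = ENNReal.ofReal (∫ ω in s, (Y ω - b) ∂μ) :=
        (ofReal_integral_eq_lintegral_ofReal (hY.sub (integrable_const b)).integrableOn
          ((ae_restrict_iff' hs).2 (ae_of_all _ fun ω hω ↦ sub_nonneg.2 hω))).symm
    _ ≤ ENNReal.ofReal (η * (μ s).toReal) := ENNReal.ofReal_le_ofReal hle
    _ = ENNReal.ofReal η * μ s := by
        rw [ENNReal.ofReal_mul' ENNReal.toReal_nonneg, ENNReal.ofReal_toReal (measure_ne_top μ s)]

theorem lintegral_map_ofReal_sub_le_mul_map_Ioi {Y : Ω → ℝ} (hYm : Measurable Y)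
    (hY : Integrable Y μ) {η : ℝ} (h : ∀ b, 0 ≤ b → 0 < (μ {ω | b ≤ Y ω}).toReal →
      (∫ ω in {ω | b ≤ Y ω}, (Y ω - b) ∂μ) / (μ {ω | b ≤ Y ω}).toReal ≤ η)
    {a : ℝ} (ha : 0 ≤ a) :
    ∫⁻ t, ENNReal.ofReal (t - a) ∂(μ.map Y) ≤ ENNReal.ofReal η * μ.map Y (Ioi a) := by
  refine lintegral_ofReal_sub_le_mul_measure_Ioi fun b hab ↦ ?_
  rw [lintegral_map (by fun_prop) hYm, Measure.map_apply hYm measurableSet_Ici]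
  exact lintegral_ofReal_sub_le_of_setIntegral_div_le hYm hY (h b (ha.trans hab.le))

theorem ProbabilityTheory.IndepFun.lintegral_comp_eq_lintegral_lintegral_map
    {β γ : Type*} {mβ : MeasurableSpace β} {mγ : MeasurableSpace γ} {Y : Ω → β} {Z : Ω → γ}
    (hYZ : IndepFun Y Z μ) (hY : Measurable Y) (hZ : Measurable Z)
    {f : β × γ → ℝ≥0∞} (hf : Measurable f) :
    ∫⁻ ω, f (Y ω, Z ω) ∂μ = ∫⁻ ω, ∫⁻ z, f (Y ω, z) ∂(μ.map Z) ∂μ := by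
  rw [← lintegral_map hf (hY.prodMk hZ), hYZ.map_prod_eq_prod_map_map hY.aemeasurable
    hZ.aemeasurable, lintegral_prod _ hf.aemeasurable, lintegral_map hf.lintegral_prod_right' hY]

theorem setLIntegral_ofReal_sub_le_of_indepFun {β : Type*} {mβ : MeasurableSpace β}
    {Y : Ω → β} {Z : Ω → ℝ} (hY : Measurable Y) (hZ : Measurable Z) (hYZ : IndepFun Y Z μ)
    {Q : Set β} (hQ : MeasurableSet Q) {g : β → ℝ} (hg : Measurable g) (hg0 : ∀ y ∈ Q, 0 ≤ g y)
    {c : ℝ≥0∞}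
    (hexcess : ∀ a, 0 ≤ a → ∫⁻ t, ENNReal.ofReal (t - a) ∂(μ.map Z) ≤ c * μ.map Z (Ioi a)) :
    ∫⁻ ω in Y ⁻¹' Q, ENNReal.ofReal (Z ω - g (Y ω)) ∂μ
      ≤ c * μ (Y ⁻¹' Q ∩ {ω | g (Y ω) < Z ω}) := by
  set F : β × ℝ → ℝ≥0∞ := (Prod.fst ⁻¹' Q).indicator fun p ↦ ENNReal.ofReal (p.2 - g p.1)
  set G : Set (β × ℝ) := Prod.fst ⁻¹' Q ∩ {p | g p.1 < p.2}
  have hF : Measurable F := Measurable.indicator (by fun_prop) (measurable_fst hQ)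
  have hG : MeasurableSet G :=
    measurable_fst hQ |>.inter (measurableSet_lt (hg.comp measurable_fst) measurable_snd)
  have hinner : ∀ y, ∫⁻ t, F (y, t) ∂(μ.map Z) ≤ c * ∫⁻ t, G.indicator 1 (y, t) ∂(μ.map Z) := by
    intro y
    by_cases hy : y ∈ Q
    · have hGy : ∀ t, G.indicator 1 (y, t) = (Ioi (g y)).indicator (1 : ℝ → ℝ≥0∞) t := by
        intro t
        by_cases ht : g y < t <;> simp [G, hy, ht, indicator]
      simp only [F, indicator_of_mem (show (y, _) ∈ Prod.fst ⁻¹' Q from hy), hGy]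
      rw [lintegral_indicator_one measurableSet_Ioi]
      exact hexcess _ (hg0 y hy)
    · simp [F, hy]
  calc ∫⁻ ω in Y ⁻¹' Q, ENNReal.ofReal (Z ω - g (Y ω)) ∂μ = ∫⁻ ω, F (Y ω, Z ω) ∂μ := by
        rw [← lintegral_indicator (hY hQ)]; rfl
    _ = ∫⁻ ω, ∫⁻ t, F (Y ω, t) ∂(μ.map Z) ∂μ :=
        hYZ.lintegral_comp_eq_lintegral_lintegral_map hY hZ hF
    _ ≤ ∫⁻ ω, c * ∫⁻ t, G.indicator 1 (Y ω, t) ∂(μ.map Z) ∂μ := lintegral_mono fun ω ↦ hinner _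
    _ = c * ∫⁻ ω, G.indicator 1 (Y ω, Z ω) ∂μ := by
        rw [lintegral_const_mul c (f := fun ω ↦ ∫⁻ t, G.indicator 1 (Y ω, t) ∂(μ.map Z))
          ((measurable_one.indicator hG).lintegral_prod_right'.comp hY),
          hYZ.lintegral_comp_eq_lintegral_lintegral_map hY hZ (measurable_one.indicator hG)]
    _ = c * μ (Y ⁻¹' Q ∩ {ω | g (Y ω) < Z ω}) :=
        congrArg (c * ·) (lintegral_indicator_one ((hY.prodMk hZ) hG))

end Overshoot

theorem setLIntegral_ofReal_sub_le_of_indep {Ω : Type*} {m mΩ : MeasurableSpace Ω}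
    {μ : Measure Ω} [IsFiniteMeasure μ] {Z : Ω → ℝ} (hm : m ≤ mΩ) (hZ : Measurable Z)
    (hind : Indep m (MeasurableSpace.comap Z inferInstance) μ)
    {P : Set Ω} (hP : MeasurableSet[m] P) {h : Ω → ℝ} (hh : Measurable[m] h)
    (h0 : ∀ ω ∈ P, 0 ≤ h ω) {c : ℝ≥0∞}
    (hexcess : ∀ a, 0 ≤ a → ∫⁻ t, ENNReal.ofReal (t - a) ∂(μ.map Z) ≤ c * μ.map Z (Ioi a)) :
    ∫⁻ ω in P, ENNReal.ofReal (Z ω - h ω) ∂μ ≤ c * μ (P ∩ {ω | h ω < Z ω}) :=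
  setLIntegral_ofReal_sub_le_of_indepFun (mβ := m) (Y := id) (measurable_id'' hm) hZ
    ((IndepFun_iff_Indep (mβ := m) id Z μ).2 (by rwa [@MeasurableSpace.comap_id Ω m])) hP hh h0
    hexcess

section RandomWalk

variable {Ω β : Type*} {mΩ : MeasurableSpace Ω} {mβ : MeasurableSpace β} {μ : Measure Ω}

def partialSum (X : ℕ → Ω → ℝ) (n : ℕ) (ω : Ω) : ℝ := ∑ i ∈ Finset.range n, X i ω

def upperExit (X : ℕ → Ω → ℝ) (I : Set ℝ) (A : ℝ) : Set Ω :=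
  {ω | (∃ n, 1 ≤ n ∧ partialSum X n ω ∉ I) ∧ A < partialSum X (exitTime (partialSum X · ω) I) ω}

theorem partialSum_succ (X : ℕ → Ω → ℝ) (n : ℕ) (ω : Ω) :
    partialSum X (n + 1) ω = partialSum X n ω + X n ω :=
  Finset.sum_range_succ _ _

theorem measurable_partialSum {X : ℕ → Ω → ℝ} (hX : ∀ i, Measurable (X i)) (n : ℕ) :
    Measurable (partialSum X n) :=
  Finset.measurable_sum _ fun i _ ↦ hX i

theorem measurable_partialSum_iSup_lt_comap {X : ℕ → Ω → ℝ} {k n : ℕ} (hkn : k ≤ n) :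
    Measurable[⨆ i < n, MeasurableSpace.comap (X i) inferInstance] (partialSum X k) :=
  Finset.measurable_sum _ fun i hi ↦ (comap_measurable (X i)).mono
    (le_iSup₂ (f := fun i _ ↦ MeasurableSpace.comap (X i) inferInstance) i
      (by rw [Finset.mem_range] at hi; omega)) le_rfl

theorem measurableSet_forall_partialSum_mem {m : MeasurableSpace Ω} {X : ℕ → Ω → ℝ} {I : Set ℝ}
    (hI : MeasurableSet I) {n : ℕ} (hS : ∀ k ≤ n, Measurable[m] (partialSum X k)) :
    MeasurableSet[m] {ω | ∀ k ∈ Finset.Icc 1 n, partialSum X k ω ∈ I} := by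
  simp only [ofPred_forall]
  exact Finset.measurableSet_biInter _ fun k hk ↦ hS k (Finset.mem_Icc.1 hk).2 hI

theorem upperExit_eq_iUnion {X : ℕ → Ω → ℝ} {I : Set ℝ} {A : ℝ} (hIA : I ⊆ Iic A) :
    upperExit X I A = ⋃ n, {ω | ∀ k ∈ Finset.Icc 1 n, partialSum X k ω ∈ I} ∩
      {ω | A < partialSum X (n + 1) ω} := by
  ext ω
  rw [mem_iUnion]
  exact exists_exit_and_exitTime_mem_iff ((Iic_disjoint_Ioi le_rfl).mono_left hIA)

theorem measurableSet_upperExit {X : ℕ → Ω → ℝ} (hX : ∀ i, Measurable (X i)) {I : Set ℝ}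
    (hI : MeasurableSet I) {A : ℝ} (hIA : I ⊆ Iic A) : MeasurableSet (upperExit X I A) := by
  rw [upperExit_eq_iUnion hIA]
  exact .iUnion fun n ↦
    (measurableSet_forall_partialSum_mem hI fun k _ ↦ measurable_partialSum hX k).inter
      (measurableSet_lt measurable_const (measurable_partialSum hX _))

theorem ProbabilityTheory.iIndepFun.indep_iSup_lt_comap {X : ℕ → Ω → β}
    (hX : ∀ i, Measurable (X i)) (hindep : iIndepFun X μ) (n : ℕ) :
    Indep (⨆ i < n, mβ.comap (X i)) (mβ.comap (X n)) μ := by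
  simpa using indep_iSup_of_disjoint (fun i ↦ (hX i).comap_le) hindep.iIndep
    (S := Iio n) (T := {n}) (by simp)

variable [IsFiniteMeasure μ]

theorem setLIntegral_ofReal_partialSum_succ_sub_le {X : ℕ → Ω → ℝ}
    (hX : ∀ i, Measurable (X i)) (hindep : iIndepFun X μ) {A : ℝ} (hA : 0 ≤ A) {I : Set ℝ}
    (hI : MeasurableSet I) (hIA : I ⊆ Iic A) {c : ℝ≥0∞} (n : ℕ)
    (hexcess : ∀ a, 0 ≤ a →
      ∫⁻ t, ENNReal.ofReal (t - a) ∂(μ.map (X n)) ≤ c * μ.map (X n) (Ioi a)) :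
    ∫⁻ ω in {ω | ∀ k ∈ Finset.Icc 1 n, partialSum X k ω ∈ I},
        ENNReal.ofReal (partialSum X (n + 1) ω - A) ∂μ
      ≤ c * μ ({ω | ∀ k ∈ Finset.Icc 1 n, partialSum X k ω ∈ I} ∩
          {ω | A < partialSum X (n + 1) ω}) := by
  have h0 : ∀ ω ∈ {ω | ∀ k ∈ Finset.Icc 1 n, partialSum X k ω ∈ I}, 0 ≤ A - partialSum X n ω := by
    intro ω hω
    rcases Nat.eq_zero_or_pos n with rfl | hn
    · simpa [partialSum] using hA
    · exact sub_nonneg.2 (hIA (hω n (Finset.mem_Icc.2 ⟨hn, le_rfl⟩)))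
  have key := setLIntegral_ofReal_sub_le_of_indep (iSup₂_le fun i _ ↦ (hX i).comap_le) (hX n)
    (hindep.indep_iSup_lt_comap hX n)
    (measurableSet_forall_partialSum_mem hI fun _ hk ↦ measurable_partialSum_iSup_lt_comap hk)
    ((measurable_partialSum_iSup_lt_comap le_rfl).const_sub A) h0 hexcess
  simp only [partialSum_succ, ← sub_lt_iff_lt_add'] at key ⊢
  convert key using 4 with ω
  ring

theorem setLIntegral_ofReal_partialSum_exitTime_sub_le {X : ℕ → Ω → ℝ}
    (hX : ∀ i, Measurable (X i)) (hindep : iIndepFun X μ) {A : ℝ} (hA : 0 ≤ A) {I : Set ℝ}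
    (hI : MeasurableSet I) (hIA : I ⊆ Iic A) {c : ℝ≥0∞}
    (hexcess : ∀ n a, 0 ≤ a →
      ∫⁻ t, ENNReal.ofReal (t - a) ∂(μ.map (X n)) ≤ c * μ.map (X n) (Ioi a)) :
    ∫⁻ ω in upperExit X I A, ENNReal.ofReal (partialSum X (exitTime (partialSum X · ω) I) ω - A) ∂μ
      ≤ c * μ (upperExit X I A) := by
  set En : ℕ → Set Ω := fun n ↦
    {ω | ∀ k ∈ Finset.Icc 1 n, partialSum X k ω ∈ I} ∩ {ω | A < partialSum X (n + 1) ω}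
  have hEn_meas : ∀ n, MeasurableSet (En n) := fun n ↦
    (measurableSet_forall_partialSum_mem hI fun k _ ↦ measurable_partialSum hX k).inter
      (measurableSet_lt measurable_const (measurable_partialSum hX _))
  have hexit : ∀ n, ∀ ω ∈ En n, exitTime (partialSum X · ω) I = n + 1 := fun n ω hω ↦
    exitTime_eq_succ_of_mem ((Iic_disjoint_Ioi le_rfl).mono_left hIA) hω.1 hω.2
  have hdisj : Pairwise (Disjoint on En) := fun m n hmn ↦ disjoint_left.2 fun ω hm hn ↦
    hmn (by have := (hexit m ω hm).symm.trans (hexit n ω hn); omega)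
  rw [upperExit_eq_iUnion hIA, lintegral_iUnion hEn_meas hdisj, measure_iUnion hdisj hEn_meas,
    ← ENNReal.tsum_mul_left]
  refine ENNReal.tsum_le_tsum fun n ↦ ?_
  calc ∫⁻ ω in En n, ENNReal.ofReal (partialSum X (exitTime (partialSum X · ω) I) ω - A) ∂μ
      = ∫⁻ ω in En n, ENNReal.ofReal (partialSum X (n + 1) ω - A) ∂μ :=
        setLIntegral_congr_fun (hEn_meas n) fun ω hω ↦ by rw [hexit n ω hω]
    _ ≤ _ := lintegral_mono_set inter_subset_left
    _ ≤ c * μ (En n) :=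
        setLIntegral_ofReal_partialSum_succ_sub_le hX hindep hA hI hIA n (hexcess n)

end RandomWalk

theorem two_sided_exit_positive_overshoot_general
    {Ω : Type*} [MeasurableSpace Ω] (μ : Measure Ω) [IsProbabilityMeasure μ]
    (X : ℕ → Ω → ℝ) (hmeas : ∀ i, Measurable (X i))
    (hindep : iIndepFun X μ)
    (hident : ∀ i, IdentDistrib (X i) (X 0) μ μ)
    (hint : Integrable (X 0) μ)
    (hpos : 0 < (μ {ω | 0 ≤ X 0 ω}).toReal)
    (η₀ : ℝ)
    (hη₀ : ∀ x : ℝ, 0 ≤ x → 0 < (μ {ω | x ≤ X 0 ω}).toReal →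
      (∫ ω in {ω | x ≤ X 0 ω}, (X 0 ω - x) ∂μ) / (μ {ω | x ≤ X 0 ω}).toReal ≤ η₀)
    (A B : ℝ) (hA : 0 ≤ A) :
    -- the two-sided exit time and the upper-exit event
    ∀ τ : Ω → ℕ,
      (∀ ω, τ ω = sInf {n : ℕ | 1 ≤ n ∧
          (∑ k ∈ Finset.range n, X k ω) ∉ Set.Icc (-B) A}) →
      ∀ E : Set Ω,
        E = {ω | (∃ n : ℕ, 1 ≤ n ∧
              (∑ k ∈ Finset.range n, X k ω) ∉ Set.Icc (-B) A) ∧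
            A < ∑ k ∈ Finset.range (τ ω), X k ω} →
        0 < (μ E).toReal →
        (∫ ω in E, ((∑ k ∈ Finset.range (τ ω), X k ω) - A) ∂μ) / (μ E).toReal
          ≤ η₀ := by
  intro τ hτ E hE hEpos
  obtain rfl : τ = fun ω ↦ exitTime (partialSum X · ω) (Icc (-B) A) := funext hτ
  obtain rfl : E = upperExit X (Icc (-B) A) A := hE
  have hη₀_nonneg : 0 ≤ η₀ :=
    (div_nonneg (setIntegral_nonneg (measurableSet_le measurable_const (hmeas 0))
      fun _ hω ↦ sub_nonneg.2 hω) ENNReal.toReal_nonneg).trans (hη₀ 0 le_rfl hpos)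
  have hexcess : ∀ n a, 0 ≤ a → ∫⁻ t, ENNReal.ofReal (t - a) ∂(μ.map (X n))
      ≤ ENNReal.ofReal η₀ * μ.map (X n) (Ioi a) := fun n a ha ↦
    (hident n).map_eq ▸ lintegral_map_ofReal_sub_le_mul_map_Ioi (hmeas 0) hint hη₀ ha
  have hlint := setLIntegral_ofReal_partialSum_exitTime_sub_le (I := Icc (-B) A) hmeas hindep hA
    measurableSet_Icc Icc_subset_Iic_self hexcess
  rw [div_le_iff₀ hEpos]
  refine integral_le_of_lintegral_ofReal_le (ae_restrict_of_forall_mem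
    (measurableSet_upperExit hmeas measurableSet_Icc Icc_subset_Iic_self)
    fun ω hω ↦ sub_nonneg.2 hω.2.le) (by positivity) ?_
  rwa [ENNReal.ofReal_mul hη₀_nonneg, ENNReal.ofReal_toReal (measure_ne_top μ _)]

/-- Two-sided exit positive overshoot bound: for an i.i.d. random walk with
positive drift and one-step positive mean-excess parameter `η₀⁺`
(i.e. `E[X - x | X ≥ x] ≤ η₀` for every `x ≥ 0`), the mean overshoot above
the upper barrier at the two-sided exit time `τ = inf{n ≥ 1 : S n ∉ [-B, A]}`
satisfies `E[S_τ - A | 𝓔₊] ≤ η₀` on the upper-exit event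
`𝓔₊ = {S_τ > A}` whenever `ℙ[𝓔₊] > 0`. -/
theorem two_sided_exit_positive_overshoot
    {Ω : Type*} [MeasurableSpace Ω] (μ : Measure Ω) [IsProbabilityMeasure μ]
    (X : ℕ → Ω → ℝ) (hmeas : ∀ i, Measurable (X i))
    (hindep : iIndepFun X μ)
    (hident : ∀ i, IdentDistrib (X i) (X 0) μ μ)
    (hint : Integrable (X 0) μ) (hmean : 0 < ∫ ω, X 0 ω ∂μ)
    (hpos : 0 < (μ {ω | 0 ≤ X 0 ω}).toReal)
    (η₀ : ℝ)
    (hη₀ : ∀ x : ℝ, 0 ≤ x → 0 < (μ {ω | x ≤ X 0 ω}).toReal →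
      (∫ ω in {ω | x ≤ X 0 ω}, (X 0 ω - x) ∂μ) / (μ {ω | x ≤ X 0 ω}).toReal ≤ η₀)
    (A B : ℝ) (hA : 0 ≤ A) (hB : 0 ≤ B) :
    -- the two-sided exit time and the upper-exit event
    ∀ τ : Ω → ℕ,
      (∀ ω, τ ω = sInf {n : ℕ | 1 ≤ n ∧
          (∑ k ∈ Finset.range n, X k ω) ∉ Set.Icc (-B) A}) →
      ∀ E : Set Ω,
        E = {ω | (∃ n : ℕ, 1 ≤ n ∧
              (∑ k ∈ Finset.range n, X k ω) ∉ Set.Icc (-B) A) ∧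
            A < ∑ k ∈ Finset.range (τ ω), X k ω} →
        0 < (μ E).toReal →
        (∫ ω in E, ((∑ k ∈ Finset.range (τ ω), X k ω) - A) ∂μ) / (μ E).toReal
          ≤ η₀ :=
  two_sided_exit_positive_overshoot_general μ X hmeas hindep hident hint hpos η₀ hη₀ A B hA
end
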